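/- arXiv:2008.07351 — 3 statements merged into one kernel-verified Lean document; each statement's English description precedes it below -/
import Mathlib

section
/- Let m ≥ 1 be a natural number, and κ, μ real constants with μ ≠ 0. Define φ(τ) = ν·e^(μ(1+τ))/(1+τ)^m + ((κ−2)(1+τ))/μ + ((κ − 2 − κμ/(m+1))/μ^(m+2))·Σ_{j=0}^{m} ((m+1)!/j!)·μ^j·(1+τ)^(j−m), where ν = e^(−μ)·((−κ+2)/μ + ((−κ+2+κμ/(m+1))/μ^(m+2))·Σ_{j=0}^{m} ((m+1)!/j!)·μ^j). Then φ(0) = 0 and φ satisfies the ODE φ'(τ) + (m/(1+τ) − μ)·φ(τ) + (κ−2)·τ − 2 = 0 for all τ > −1. -/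
/-!
Put `s = 1 + τ`. Then `φ = ψ(s) / s ^ m` with
`ψ(s) = ν e^{μ s} + (κ - 2) s^{m+1} / μ + c (m+1)! E(μ s)`, where `c` is the coefficient of the
sum in `φ` and `E` is the Taylor polynomial of `exp` of degree `m`. The integrating factor `s ^ m`
turns `f ↦ f' + (m / s - μ) f` into `ψ ↦ (ψ' - μ ψ) / s ^ m`. This annihilates the exponential, and
since differentiating `E` drops its top term, the polynomial part contributes only that term; the
value of `c` makes the result `2 - (κ - 2) τ`. The constant `ν` is the one for which `ψ(1) = 0`.
-/

open Finset Filter Topology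

section

open Nat

noncomputable def truncExp (n : ℕ) (x : ℝ) : ℝ := ∑ j ∈ range n, x ^ j / (j ! : ℝ)

theorem truncExp_succ (n : ℕ) (x : ℝ) : truncExp (n + 1) x = truncExp n x + x ^ n / (n ! : ℝ) :=
  sum_range_succ _ _

theorem hasDerivAt_truncExp_succ (n : ℕ) (x : ℝ) :
    HasDerivAt (truncExp (n + 1)) (truncExp n x) x := by
  induction n with
  | zero =>
    rw [show truncExp 1 = fun _ => 1 from funext fun y => by simp [truncExp]]
    simpa [truncExp] using hasDerivAt_const x (1 : ℝ)
  | succ n ih =>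
    have hterm : HasDerivAt (fun y : ℝ => y ^ (n + 1) / ((n + 1) ! : ℝ)) (x ^ n / (n ! : ℝ)) x := by
      refine ((hasDerivAt_pow (n + 1) x).div_const _).congr_deriv ?_
      push_cast [factorial_succ]
      field_simp
    rw [funext (truncExp_succ (n + 1)), truncExp_succ]
    exact ih.add hterm

theorem sum_factorial_div_mul_zpow (m : ℕ) (μ s : ℝ) (hs : s ≠ 0) :
    ∑ j ∈ range (m + 1), ((m + 1)! / j ! : ℝ) * μ ^ j * s ^ ((j : ℤ) - m)
      = (m + 1)! * truncExp (m + 1) (μ * s) / s ^ m := by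
  rw [truncExp, mul_sum, sum_div]
  refine sum_congr rfl fun j _ => ?_
  rw [zpow_sub₀ hs, zpow_natCast, zpow_natCast]
  ring

theorem hasDerivAt_div_pow {ψ : ℝ → ℝ} {ψ' s : ℝ} (m : ℕ) (hψ : HasDerivAt ψ ψ' s) (hs : s ≠ 0) :
    HasDerivAt (fun t => ψ t / t ^ m) (ψ' / s ^ m - m / s * (ψ s / s ^ m)) s := by
  refine (hψ.fun_div (hasDerivAt_pow m s) (pow_ne_zero m hs)).congr_deriv ?_
  rcases m with _ | m
  · simp
  · rw [Nat.add_sub_cancel, pow_succ]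
    field_simp

end

theorem stmt_8_general (m : ℕ) (κ μ : ℝ) (hμ : μ ≠ 0) (ν : ℝ)
    (hν : ν = Real.exp (-μ) *
      ((-κ + 2) / μ + ((-κ + 2 + κ * μ / (m + 1)) / μ ^ (m + 2)) *
        ∑ j ∈ Finset.range (m + 1),
          ((Nat.factorial (m + 1) : ℝ) / (Nat.factorial j : ℝ)) * μ ^ j))
    (φ : ℝ → ℝ)
    (hφ : ∀ τ : ℝ, φ τ =
      ν * Real.exp (μ * (1 + τ)) / (1 + τ) ^ m
        + (κ - 2) * (1 + τ) / μ
        + ((κ - 2 - κ * μ / (m + 1)) / μ ^ (m + 2)) *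
            ∑ j ∈ Finset.range (m + 1),
              ((Nat.factorial (m + 1) : ℝ) / (Nat.factorial j : ℝ)) * μ ^ j *
                (1 + τ) ^ ((j : ℤ) - (m : ℤ))) :
    φ 0 = 0 ∧
      ∀ τ : ℝ, -1 < τ →
        deriv φ τ + ((m : ℝ) / (1 + τ) - μ) * φ τ + (κ - 2) * τ - 2 = 0 := by
  refine ⟨?_, fun τ hτ => ?_⟩
  · rw [hφ 0, hν]
    simp only [add_zero, mul_one, one_pow, one_zpow, div_one]
    rw [Real.exp_neg]
    field_simp
    ring
  set c := (κ - 2 - κ * μ / (m + 1)) / μ ^ (m + 2)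
  set ψ : ℝ → ℝ := fun s =>
    ν * Real.exp (μ * s) + (κ - 2) * s ^ (m + 1) / μ
      + c * (m + 1).factorial * truncExp (m + 1) (μ * s)
  have hrep : φ =ᶠ[𝓝 τ] fun t => ψ (1 + t) / (1 + t) ^ m := by
    filter_upwards [Ioi_mem_nhds hτ] with t (ht : -1 < t)
    have hs : 1 + t ≠ 0 := by linarith
    rw [hφ t, sum_factorial_div_mul_zpow m μ _ hs]
    simp only [ψ]
    field_simp
    ring
  have hs : 1 + τ ≠ 0 := by linarith
  have hψ : HasDerivAt ψ
      (ν * (Real.exp (μ * (1 + τ)) * μ) + (κ - 2) * ((m + 1 : ℕ) * (1 + τ) ^ m) / μ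
        + c * (m + 1).factorial * (truncExp m (μ * (1 + τ)) * μ)) (1 + τ) := by
    have hlin : HasDerivAt (fun s => μ * s) μ (1 + τ) := by
      simpa using (hasDerivAt_id (1 + τ)).const_mul μ
    exact ((hlin.exp.const_mul ν).add
      (((hasDerivAt_pow (m + 1) _).const_mul (κ - 2)).div_const μ)).add
        (((hasDerivAt_truncExp_succ m _).comp _ hlin).const_mul _)
  rw [hrep.deriv_eq, ((hasDerivAt_div_pow m hψ hs).comp_const_add 1 τ).deriv, hrep.eq_of_nhds]
  simp only [ψ, c, truncExp_succ, Nat.factorial_succ, mul_pow]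
  push_cast
  field_simp
  ring

/-- Explicit solution (KRS8)–(KRS9) of the soliton ODE: `φ(0) = 0` and
`φ' + (m/(1+τ) − μ)·φ + (κ−2)·τ − 2 = 0`. -/
theorem stmt_8 (m : ℕ) (hm : 1 ≤ m) (κ μ : ℝ) (hμ : μ ≠ 0) (ν : ℝ)
    (hν : ν = Real.exp (-μ) *
      ((-κ + 2) / μ + ((-κ + 2 + κ * μ / (m + 1)) / μ ^ (m + 2)) *
        ∑ j ∈ Finset.range (m + 1),
          ((Nat.factorial (m + 1) : ℝ) / (Nat.factorial j : ℝ)) * μ ^ j))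
    (φ : ℝ → ℝ)
    (hφ : ∀ τ : ℝ, φ τ =
      ν * Real.exp (μ * (1 + τ)) / (1 + τ) ^ m
        + (κ - 2) * (1 + τ) / μ
        + ((κ - 2 - κ * μ / (m + 1)) / μ ^ (m + 2)) *
            ∑ j ∈ Finset.range (m + 1),
              ((Nat.factorial (m + 1) : ℝ) / (Nat.factorial j : ℝ)) * μ ^ j *
                (1 + τ) ^ ((j : ℤ) - (m : ℤ))) :
    φ 0 = 0 ∧
      ∀ τ : ℝ, -1 < τ →
        deriv φ τ + ((m : ℝ) / (1 + τ) - μ) * φ τ + (κ - 2) * τ - 2 = 0 :=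
  stmt_8_general m κ μ hμ ν hν φ hφ
end

section
/- Let m ≥ 1 and let κ > 2 be a real constant. Define ν(κ,μ) = e^(−μ)·((−κ+2)/μ + ((−κ+2+κμ/(m+1))/μ^(m+2))·Σ_{j=0}^{m} ((m+1)!/j!)·μ^j) for μ > 0. Then there exists μ > 0 with ν(κ,μ) = 0. -/
/-!
Multiplying by `μ ^ (m + 2) * exp μ` turns `ν` into the polynomial
`P μ = (2 - κ) μ ^ (m + 1) + (2 - κ + κ μ / (m + 1)) S μ`, where `S` is the sum in `ν`.
For `κ > 2` we have `P 0 = (2 - κ) (m + 1)! < 0`, while comparing `S μ` with its top term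
`(m + 1) μ ^ m` gives `P μ ≥ μ ^ m (2 μ - (κ - 2) (m + 1) (m + 1)!)` for `μ ≥ 1`, which is positive
for large `μ`. The intermediate value theorem gives a zero of `P`, necessarily positive.
-/

namespace SolitonParameter

noncomputable section

def truncExpSum (m : ℕ) (μ : ℝ) : ℝ :=
  ∑ j ∈ Finset.range (m + 1), ((Nat.factorial (m + 1) : ℝ) / (Nat.factorial j : ℝ)) * μ ^ j

def numerator (m : ℕ) (κ μ : ℝ) : ℝ :=
  (-κ + 2) * μ ^ (m + 1) + (-κ + 2 + κ * μ / (m + 1)) * truncExpSum m μ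

end

variable {m : ℕ} {κ μ : ℝ}

theorem continuous_truncExpSum (m : ℕ) : Continuous (truncExpSum m) := by
  unfold truncExpSum
  fun_prop

theorem continuous_numerator (m : ℕ) (κ : ℝ) : Continuous (numerator m κ) := by
  unfold numerator
  have := continuous_truncExpSum m
  fun_prop

theorem truncExpSum_pos (hμ : 0 ≤ μ) : 0 < truncExpSum m μ := by
  refine Finset.sum_pos' (fun j _ => by positivity) ⟨0, by simp, ?_⟩
  simp only [Nat.factorial_zero, Nat.cast_one, div_one, pow_zero, mul_one]
  positivity

theorem succ_mul_pow_le_truncExpSum (hμ : 0 ≤ μ) : (m + 1) * μ ^ m ≤ truncExpSum m μ := by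
  have htop : ((Nat.factorial (m + 1) : ℝ) / (Nat.factorial m : ℝ)) = m + 1 := by
    rw [Nat.factorial_succ]
    push_cast
    field_simp
  rw [← htop]
  exact Finset.single_le_sum (f := fun j => ((Nat.factorial (m + 1) : ℝ) / (Nat.factorial j : ℝ)) * μ ^ j)
    (fun j _ => by positivity) (Finset.self_mem_range_succ m)

theorem truncExpSum_le (hμ : 1 ≤ μ) :
    truncExpSum m μ ≤ (m + 1) * (Nat.factorial (m + 1) : ℝ) * μ ^ m := by
  calc truncExpSum m μ
      ≤ ∑ _j ∈ Finset.range (m + 1), (Nat.factorial (m + 1) : ℝ) * μ ^ m := by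
        refine Finset.sum_le_sum fun j hj => mul_le_mul ?_ ?_ (by positivity) (by positivity)
        · exact div_le_self (by positivity) (by exact_mod_cast Nat.factorial_pos j)
        · exact pow_le_pow_right₀ hμ (Nat.lt_succ_iff.mp (Finset.mem_range.mp hj))
    _ = (m + 1) * (Nat.factorial (m + 1) : ℝ) * μ ^ m := by
        rw [Finset.sum_const, Finset.card_range, nsmul_eq_mul]
        push_cast
        ring

theorem numerator_zero_neg (hκ : 2 < κ) : numerator m κ 0 < 0 := by
  have hS := truncExpSum_pos (m := m) le_rfl
  simp only [numerator, zero_pow m.succ_ne_zero, mul_zero, zero_div, add_zero, zero_add]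
  nlinarith

theorem pow_mul_sub_le_numerator (hκ : 2 ≤ κ) (hμ : 1 ≤ μ) :
    μ ^ m * (2 * μ - (κ - 2) * (m + 1) * (Nat.factorial (m + 1) : ℝ)) ≤ numerator m κ μ := by
  have hμ0 : 0 ≤ μ := zero_le_one.trans hμ
  have hlow : κ * μ ^ (m + 1) ≤ κ * μ / (m + 1) * truncExpSum m μ := by
    calc κ * μ ^ (m + 1) = κ * μ / (m + 1) * ((m + 1) * μ ^ m) := by
          field_simp
          ring
      _ ≤ κ * μ / (m + 1) * truncExpSum m μ :=
          mul_le_mul_of_nonneg_left (succ_mul_pow_le_truncExpSum hμ0) (by positivity)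
  have hup : (-κ + 2) * ((m + 1) * (Nat.factorial (m + 1) : ℝ) * μ ^ m) ≤
      (-κ + 2) * truncExpSum m μ :=
    mul_le_mul_of_nonpos_left (truncExpSum_le hμ) (by linarith)
  unfold numerator
  linear_combination hlow + hup

theorem exists_pos_numerator_eq_zero (hκ : 2 < κ) : ∃ μ, 0 < μ ∧ numerator m κ μ = 0 := by
  set b : ℝ := (κ - 2) * (m + 1) * (Nat.factorial (m + 1) : ℝ) / 2 + 1
  have hb : 1 ≤ b := by simp only [b, le_add_iff_nonneg_left]; positivity
  have hPb : 0 < numerator m κ b := by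
    refine lt_of_lt_of_le ?_ (pow_mul_sub_le_numerator hκ.le hb)
    have : 0 < 2 * b - (κ - 2) * (m + 1) * (Nat.factorial (m + 1) : ℝ) := by
      simp only [b]
      linarith
    positivity
  obtain ⟨μ, hμ, hPμ⟩ := intermediate_value_Icc (zero_le_one.trans hb)
    (continuous_numerator m κ).continuousOn ⟨(numerator_zero_neg hκ).le, hPb.le⟩
  refine ⟨μ, lt_of_le_of_ne hμ.1 ?_, hPμ⟩
  rintro rfl
  exact (numerator_zero_neg hκ).ne hPμ

theorem exp_mul_eq_numerator_div (hμ : 0 < μ) :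
    Real.exp (-μ) * ((-κ + 2) / μ + ((-κ + 2 + κ * μ / (m + 1)) / μ ^ (m + 2)) * truncExpSum m μ)
      = Real.exp (-μ) * (numerator m κ μ / μ ^ (m + 2)) := by
  unfold numerator
  field_simp
  ring

end SolitonParameter

theorem stmt_10_general (m : ℕ) (κ : ℝ) (hκ : 2 < κ)
    (ν : ℝ → ℝ)
    (hν : ∀ μ : ℝ, 0 < μ → ν μ = Real.exp (-μ) *
      ((-κ + 2) / μ + ((-κ + 2 + κ * μ / (m + 1)) / μ ^ (m + 2)) *
        ∑ j ∈ Finset.range (m + 1),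
          ((Nat.factorial (m + 1) : ℝ) / (Nat.factorial j : ℝ)) * μ ^ j)) :
    ∃ μ : ℝ, 0 < μ ∧ ν μ = 0 := by
  obtain ⟨μ, hμ, hP⟩ := SolitonParameter.exists_pos_numerator_eq_zero (m := m) hκ
  refine ⟨μ, hμ, ?_⟩
  rw [hν μ hμ, ← SolitonParameter.truncExpSum, SolitonParameter.exp_mul_eq_numerator_div hμ, hP,
    zero_div, mul_zero]

/-- Claim 4.4: existence of `μ > 0` with `ν(κ,μ) = 0` when `κ > 2`. -/
theorem stmt_10 (m : ℕ) (hm : 1 ≤ m) (κ : ℝ) (hκ : 2 < κ)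
    (ν : ℝ → ℝ)
    (hν : ∀ μ : ℝ, 0 < μ → ν μ = Real.exp (-μ) *
      ((-κ + 2) / μ + ((-κ + 2 + κ * μ / (m + 1)) / μ ^ (m + 2)) *
        ∑ j ∈ Finset.range (m + 1),
          ((Nat.factorial (m + 1) : ℝ) / (Nat.factorial j : ℝ)) * μ ^ j)) :
    ∃ μ : ℝ, 0 < μ ∧ ν μ = 0 :=
  stmt_10_general m κ hκ ν hν
end

section
/- Let m ≥ 1, κ > 2 and μ > 0 be real constants with κ − 2 − κμ/(m+1) < 0. Define φ(τ) = ((κ−2)(1+τ))/μ + ((κ − 2 − κμ/(m+1))/μ^(m+2))·Σ_{j=0}^{m} ((m+1)!/j!)·μ^j·(1+τ)^(j−m). If φ(0) = 0 and φ'(0) > 0, then φ(τ) > 0 for all τ > 0. -/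
open Finset

/-!
Write `φ τ = a (1 + τ) + C S(1 + τ)` with `a = (κ - 2)/μ > 0`, `C < 0` and
`S x = ∑ cⱼ x^(j - m)`, a sum of nonnegative multiples of nonpositive powers of `x`.
Then `S` is antitone on `x > 0`, so `φ` is strictly increasing on `τ > -1`,
and `φ τ > φ 0 = 0` for `τ > 0`.
-/

section OrderedField

variable {K : Type*} [Field K] [LinearOrder K] [IsStrictOrderedRing K]

lemma zpow_le_zpow_left_of_nonpos₀ {x y : K} {n : ℤ} (hx : 0 < x) (hxy : x ≤ y) (hn : n ≤ 0) :
    y ^ n ≤ x ^ n :=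
  calc y ^ n = (y ^ (-n))⁻¹ := by rw [zpow_neg, inv_inv]
    _ ≤ (x ^ (-n))⁻¹ := inv_anti₀ (zpow_pos hx _) (zpow_le_zpow_left₀ (by omega) hx.le hxy)
    _ = x ^ n := by rw [zpow_neg, inv_inv]

lemma antitoneOn_sum_mul_zpow {ι : Type*} (s : Finset ι) {c : ι → K} {e : ι → ℤ}
    (hc : ∀ i ∈ s, 0 ≤ c i) (he : ∀ i ∈ s, e i ≤ 0) :
    AntitoneOn (fun x : K => ∑ i ∈ s, c i * x ^ e i) (Set.Ioi 0) :=
  fun _ hx _ _ hxy => sum_le_sum fun i hi =>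
    mul_le_mul_of_nonneg_left (zpow_le_zpow_left_of_nonpos₀ hx hxy (he i hi)) (hc i hi)

end OrderedField

lemma strictMonoOn_mul_add_mul_of_antitoneOn {R : Type*} [Ring R] [LinearOrder R]
    [IsStrictOrderedRing R] {a C : R} {S : R → R} {s : Set R}
    (ha : 0 < a) (hC : C ≤ 0) (hS : AntitoneOn S s) :
    StrictMonoOn (fun x => a * x + C * S x) s :=
  (strictMono_mul_left_of_pos ha).strictMonoOn s |>.add_monotone
    fun _ hx _ hy hxy => mul_le_mul_of_nonpos_left (hS hx hy hxy) hC

theorem stmt_11_general (m : ℕ) (κ μ : ℝ) (hκ : 2 < κ) (hμ : 0 < μ)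
    (hcoef : κ - 2 - κ * μ / (m + 1) < 0)
    (φ : ℝ → ℝ)
    (hφ : ∀ τ : ℝ, φ τ =
      (κ - 2) * (1 + τ) / μ
        + ((κ - 2 - κ * μ / (m + 1)) / μ ^ (m + 2)) *
            ∑ j ∈ Finset.range (m + 1),
              ((Nat.factorial (m + 1) : ℝ) / (Nat.factorial j : ℝ)) * μ ^ j *
                (1 + τ) ^ ((j : ℤ) - (m : ℤ)))
    (h0 : φ 0 = 0) :
    ∀ τ : ℝ, 0 < τ → 0 < φ τ := by
  intro τ hτ
  have hS : AntitoneOn (fun x : ℝ => ∑ j ∈ range (m + 1),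
      ((m + 1).factorial / j.factorial : ℝ) * μ ^ j * x ^ ((j : ℤ) - m)) (Set.Ioi 0) :=
    antitoneOn_sum_mul_zpow _ (fun j _ => by positivity)
      fun j hj => by have := mem_range.mp hj; omega
  have hmono := strictMonoOn_mul_add_mul_of_antitoneOn (a := (κ - 2) / μ)
    (div_pos (by linarith) hμ) (div_neg_of_neg_of_pos hcoef (pow_pos hμ (m + 2))).le hS
  have hφ' : ∀ τ, φ τ = (κ - 2) / μ * (1 + τ) + (κ - 2 - κ * μ / (m + 1)) / μ ^ (m + 2) *
      ∑ j ∈ range (m + 1), ((m + 1).factorial / j.factorial : ℝ) * μ ^ j *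
        (1 + τ) ^ ((j : ℤ) - m) := fun τ => by rw [hφ, mul_div_right_comm]
  rw [← h0, hφ', hφ']
  exact hmono (Set.mem_Ioi.mpr (by norm_num)) (Set.mem_Ioi.mpr (by linarith)) (by linarith)

/-- Claim 4.5: positivity of the shrinking-soliton profile (KRS11). -/
theorem stmt_11 (m : ℕ) (hm : 1 ≤ m) (κ μ : ℝ) (hκ : 2 < κ) (hμ : 0 < μ)
    (hcoef : κ - 2 - κ * μ / (m + 1) < 0)
    (φ : ℝ → ℝ)
    (hφ : ∀ τ : ℝ, φ τ =
      (κ - 2) * (1 + τ) / μ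
        + ((κ - 2 - κ * μ / (m + 1)) / μ ^ (m + 2)) *
            ∑ j ∈ Finset.range (m + 1),
              ((Nat.factorial (m + 1) : ℝ) / (Nat.factorial j : ℝ)) * μ ^ j *
                (1 + τ) ^ ((j : ℤ) - (m : ℤ)))
    (h0 : φ 0 = 0) (h0' : 0 < deriv φ 0) :
    ∀ τ : ℝ, 0 < τ → 0 < φ τ :=
  stmt_11_general m κ μ hκ hμ hcoef φ hφ h0
end
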